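/- For every real γ > 0 and all natural numbers i ≥ j, ∑_{m=0}^j (-1)^m·C(j,m)·C(i+m,i)·(γ+i+m+1)_{j-m}·(γ+j)_m = (-1)^j·C(i,j)·(γ)_j, where (a)_k = a(a+1)⋯(a+k-1) is the Pochhammer symbol and C(a,b) the binomial coefficient. -/

import Mathlib

/-!
Write `T_j(m)` for the `m`-th summand and `S_j = ∑ₘ T_j(m)`. Both `S_j` and the right-hand side
`(-1)^j C(i,j) (γ)_j` equal `1` at `j = 0` and satisfy the first-order recurrence
`(j+1) S_{j+1} + (i-j)(γ+j) S_j = 0`. For the sums this is creative telescoping: Zeilberger's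
algorithm produces a certificate `G` with `(j+1) T_{j+1}(m) + (i-j)(γ+j) T_j(m) = G(m-1) - G(m)`
for every `m`, and summing over `m` leaves only boundary terms, which vanish.
-/

open Polynomial Finset

theorem ascPochhammer_succ_eval_left {S : Type*} [CommSemiring S] (n : ℕ) (x : S) :
    (ascPochhammer S (n + 1)).eval x = x * (ascPochhammer S n).eval (x + 1) := by
  simp [ascPochhammer_succ_left, eval_comp]

section CharZero

variable {K : Type*} [Field K] [CharZero K]

theorem Nat.cast_choose_succ_right_eq_div (n k : ℕ) :
    (n.choose (k + 1) : K) = (n - k) / (k + 1) * n.choose k := by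
  rw [div_mul_eq_mul_div, eq_div_iff (Nat.cast_add_one_ne_zero k)]
  rcases le_or_gt k n with hkn | hnk
  · have h : ((n.choose (k + 1) * (k + 1) : ℕ) : K) = (n.choose k * (n - k) : ℕ) :=
      congrArg _ (n.choose_succ_right_eq k)
    push_cast [hkn] at h
    linear_combination h
  · simp [Nat.choose_eq_zero_of_lt hnk, Nat.choose_eq_zero_of_lt (Nat.lt_succ_of_lt hnk)]

theorem Nat.cast_choose_succ_succ_eq_div (n k : ℕ) :
    ((n + 1).choose (k + 1) : K) = (n + 1) / (k + 1) * n.choose k := by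
  rw [div_mul_eq_mul_div, eq_div_iff (Nat.cast_add_one_ne_zero k)]
  exact_mod_cast (n.add_one_mul_choose_eq k).symm

theorem Nat.cast_add_succ_choose_left_eq_div (i m : ℕ) :
    ((i + (m + 1)).choose i : K) = (i + m + 1) / (m + 1) * (i + m).choose i := by
  rw [div_mul_eq_mul_div, eq_div_iff (Nat.cast_add_one_ne_zero m)]
  have h : (((i + m).choose i * (i + m + 1) : ℕ) : K) = ((i + m + 1).choose i * (m + 1) : ℕ) := by
    rw [(i + m).choose_mul_succ_eq i, show i + m + 1 - i = m + 1 by omega]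
  push_cast [← add_assoc] at h ⊢
  linear_combination -h

end CharZero

section Telescoping

variable {K : Type*} [CommRing K]

noncomputable def jacobiMomentTerm (γ : K) (i j m : ℕ) : K :=
  (-1) ^ m * (j.choose m : K) * ((i + m).choose i : K) *
    (ascPochhammer K (j - m)).eval (γ + i + m + 1) * (ascPochhammer K m).eval (γ + j)

noncomputable def jacobiMomentSum (γ : K) (i j : ℕ) : K :=
  ∑ m ∈ range (j + 1), jacobiMomentTerm γ i j m

/-- Zeilberger's certificate `G(m + 1)`, indexed with a shift so that `G(0) = 0` needs no
truncated `m - 1`. -/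
noncomputable def jacobiMomentCert (γ : K) (i j m : ℕ) : K :=
  (-1) ^ (m + 1) * (j.choose m : K) * ((i + (m + 1)).choose i : K) * (m + 1) * (γ + 2 * j + 1) *
    (ascPochhammer K (j - m)).eval (γ + i + m + 1) * (ascPochhammer K m).eval (γ + j + 1)

theorem jacobiMomentTerm_of_lt (γ : K) (i : ℕ) {j m : ℕ} (h : j < m) :
    jacobiMomentTerm γ i j m = 0 := by
  simp [jacobiMomentTerm, Nat.choose_eq_zero_of_lt h]

theorem jacobiMomentCert_of_lt (γ : K) (i : ℕ) {j m : ℕ} (h : j < m) :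
    jacobiMomentCert γ i j m = 0 := by
  simp [jacobiMomentCert, Nat.choose_eq_zero_of_lt h]

theorem jacobiMomentTerm_recurrence_zero (γ : K) (i j : ℕ) :
    (j + 1) * jacobiMomentTerm γ i (j + 1) 0 + (i - j) * (γ + j) * jacobiMomentTerm γ i j 0 =
      -jacobiMomentCert γ i j 0 := by
  simp [jacobiMomentTerm, jacobiMomentCert, ascPochhammer_succ_eval]
  ring

theorem jacobiMomentTerm_recurrence_succ_self (γ : K) (i j : ℕ) :
    (j + 1) * jacobiMomentTerm γ i (j + 1) (j + 1) +
        (i - j) * (γ + j) * jacobiMomentTerm γ i j (j + 1) =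
      jacobiMomentCert γ i j j - jacobiMomentCert γ i j (j + 1) := by
  simp [jacobiMomentTerm, jacobiMomentCert, ascPochhammer_succ_eval, ← add_assoc]
  ring

end Telescoping

section Recurrence

variable {K : Type*} [Field K] [CharZero K]

theorem jacobiMomentTerm_recurrence_succ_of_lt (γ : K) (i : ℕ) {j n : ℕ} (hn : n < j) :
    (j + 1) * jacobiMomentTerm γ i (j + 1) (n + 1) +
        (i - j) * (γ + j) * jacobiMomentTerm γ i j (n + 1) =
      jacobiMomentCert γ i j n - jacobiMomentCert γ i j (n + 1) := by
  obtain ⟨d, hd⟩ : ∃ d, j - n = d + 1 := ⟨j - n - 1, by omega⟩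
  have hd' : (d : K) = j - n - 1 := by
    rw [eq_sub_iff_add_eq, eq_sub_iff_add_eq]
    exact_mod_cast (by omega : d + 1 + n = j)
  have hn2 : (n : K) + 1 + 1 ≠ 0 := by exact_mod_cast (n + 1).succ_ne_zero
  simp only [jacobiMomentTerm, jacobiMomentCert, hd, show j + 1 - (n + 1) = d + 1 by omega,
    show j - (n + 1) = d by omega]
  rw [Nat.cast_choose_succ_succ_eq_div, Nat.cast_choose_succ_right_eq_div,
    Nat.cast_add_succ_choose_left_eq_div (m := n + 1)]
  push_cast [← add_assoc]
  rw [ascPochhammer_succ_eval d (γ + i + n + 1 + 1), ascPochhammer_succ_eval_left d (γ + i + n + 1),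
    ascPochhammer_succ_eval n (γ + j + 1), ascPochhammer_succ_eval_left n (γ + j), hd']
  field_simp
  ring

theorem jacobiMomentTerm_recurrence_succ (γ : K) (i : ℕ) {j n : ℕ} (hn : n ≤ j) :
    (j + 1) * jacobiMomentTerm γ i (j + 1) (n + 1) +
        (i - j) * (γ + j) * jacobiMomentTerm γ i j (n + 1) =
      jacobiMomentCert γ i j n - jacobiMomentCert γ i j (n + 1) := by
  rcases hn.lt_or_eq with hn | rfl
  · exact jacobiMomentTerm_recurrence_succ_of_lt γ i hn
  · exact jacobiMomentTerm_recurrence_succ_self γ i n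

theorem jacobiMomentSum_recurrence (γ : K) (i j : ℕ) :
    (j + 1) * jacobiMomentSum γ i (j + 1) + (i - j) * (γ + j) * jacobiMomentSum γ i j = 0 := by
  have hext : jacobiMomentSum γ i j = ∑ m ∈ range (j + 2), jacobiMomentTerm γ i j m := by
    rw [jacobiMomentSum, sum_range_succ _ (j + 1), jacobiMomentTerm_of_lt γ i (lt_add_one j),
      add_zero]
  rw [hext, jacobiMomentSum, mul_sum, mul_sum, ← sum_add_distrib, sum_range_succ',
    jacobiMomentTerm_recurrence_zero,
    sum_congr rfl fun n hn => jacobiMomentTerm_recurrence_succ γ i (mem_range_succ_iff.mp hn),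
    sum_range_sub', jacobiMomentCert_of_lt γ i j.lt_succ_self]
  ring

theorem jacobiMomentSum_eq (γ : K) (i j : ℕ) :
    jacobiMomentSum γ i j = (-1) ^ j * i.choose j * (ascPochhammer K j).eval γ := by
  induction j with
  | zero => simp [jacobiMomentSum, jacobiMomentTerm]
  | succ j ih =>
    have hrec := jacobiMomentSum_recurrence γ i j
    rw [ih] at hrec
    apply mul_left_cancel₀ (Nat.cast_add_one_ne_zero j : (j : K) + 1 ≠ 0)
    rw [Nat.cast_choose_succ_right_eq_div, ascPochhammer_succ_eval, pow_succ]
    field_simp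
    linear_combination hrec

end Recurrence

theorem stmt19_general (γ : ℝ) (i j : ℕ) :
    ∑ m ∈ Finset.range (j + 1),
        (-1 : ℝ) ^ m * (j.choose m : ℝ) * ((i + m).choose i : ℝ) *
          (ascPochhammer ℝ (j - m)).eval (γ + (i : ℝ) + (m : ℝ) + 1) *
          (ascPochhammer ℝ m).eval (γ + (j : ℝ)) =
      (-1 : ℝ) ^ j * (i.choose j : ℝ) * (ascPochhammer ℝ j).eval γ :=
  jacobiMomentSum_eq γ i j

theorem stmt19 (γ : ℝ) (hγ : 0 < γ) (i j : ℕ) (hij : j ≤ i) :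
    ∑ m ∈ Finset.range (j + 1),
        (-1 : ℝ) ^ m * (j.choose m : ℝ) * ((i + m).choose i : ℝ) *
          (ascPochhammer ℝ (j - m)).eval (γ + (i : ℝ) + (m : ℝ) + 1) *
          (ascPochhammer ℝ m).eval (γ + (j : ℝ)) =
      (-1 : ℝ) ^ j * (i.choose j : ℝ) * (ascPochhammer ℝ j).eval γ :=
  stmt19_general γ i j
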